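/- Let x ≥ 2, let q be an integer with 2 ≤ q ≤ x, and let B > 0 be real. Assume that for every a ∈ (ℤ/qℤ)^* one has π(x;q,a) ≥ 1 and |π(x;q,a) − π(x)/φ(q)| ≤ B, and assume π(x) > 0. Let X be the probability distribution on the primes p ≤ x given by Pr[X = p] = 1/(φ(q)·π(x;q,p mod q)) if gcd(p,q) = 1 and Pr[X = p] = 0 if p | q. Then the statistical distance to uniform satisfies Δ₁(X) ≤ √((φ(q)·B² + ω(q))/π(x)). -/

import Mathlib

/-!
Split the primes `p ≤ x` into those coprime to `q` and the prime factors of `q`. The latter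
get mass `0`, so each contributes `1/π(x)`, in total `ω(q)/π(x)`. On the `π(x;q,a)` primes of
a reduced class `a` the mass is constant, and they contribute together
`|π(x)/φ(q) - π(x;q,a)|/π(x) ≤ B/π(x)`. Hence `Δ₁(X) ≤ (φ(q)B + ω(q))/π(x)`, and
Cauchy–Schwarz gives `(φ(q)B + ω(q))² ≤ (φ(q) + ω(q))(φ(q)B² + ω(q))`, where
`φ(q) + ω(q) ≤ π(x)` because every reduced class contains a prime `≤ x` and `q ≤ x`.
-/

/-- The finite set of primes `p ≤ x`. -/
def primesUpTo (x : ℕ) : Finset ℕ := (Finset.range (x + 1)).filter Nat.Prime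

/-- `π(x)`, the number of primes `≤ x`. -/
def primePi (x : ℕ) : ℕ := (primesUpTo x).card

/-- `π(x;q,a)`, the number of primes `p ≤ x` with `p ≡ a (mod q)`. -/
def primePiMod (x q a : ℕ) : ℕ :=
  ((primesUpTo x).filter (fun p => p % q = a % q)).card

/-- Canonical representatives of the invertible classes `(ℤ/qℤ)^*`. -/
def residues (q : ℕ) : Finset ℕ := (Finset.range q).filter (fun a => Nat.Coprime a q)

/-- `φ*ₓ(q) = #{a ∈ (ℤ/qℤ)^* : π(x;q,a) ≠ 0}`. -/
def phiStar (x q : ℕ) : ℕ := ((residues q).filter (fun a => primePiMod x q a ≠ 0)).card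

open Finset

lemma card_residues (q : ℕ) : #(residues q) = q.totient := by
  simp only [residues, Nat.totient, Nat.coprime_comm]

lemma mod_mem_residues {p q : ℕ} (hq : q ≠ 0) (hp : p.Coprime q) : p % q ∈ residues q :=
  mem_filter.2 ⟨mem_range.2 (Nat.mod_lt _ (Nat.pos_of_ne_zero hq)),
    (ZMod.coprime_mod_iff_coprime p q).2 hp⟩

lemma filter_primesUpTo_not_coprime {x q : ℕ} (hq : q ≠ 0) (hqx : q ≤ x) :
    {p ∈ primesUpTo x | ¬ p.Coprime q} = q.primeFactors := by
  ext p
  simp only [primesUpTo, mem_filter, mem_range, Nat.mem_primeFactors, Nat.lt_succ_iff]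
  constructor
  · rintro ⟨⟨-, hp⟩, hpq⟩
    exact ⟨hp, by rwa [hp.coprime_iff_not_dvd, not_not] at hpq, hq⟩
  · rintro ⟨hp, hpq, -⟩
    exact ⟨⟨(Nat.le_of_dvd (Nat.pos_of_ne_zero hq) hpq).trans hqx, hp⟩,
      by rwa [hp.coprime_iff_not_dvd, not_not]⟩

lemma card_filter_coprime_filter_mod_eq {x q a : ℕ} (ha : a ∈ residues q) :
    #{p ∈ {p ∈ primesUpTo x | p.Coprime q} | p % q = a} = primePiMod x q a := by
  obtain ⟨haq, hcop⟩ := mem_filter.1 ha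
  rw [primePiMod, filter_filter, Nat.mod_eq_of_lt (mem_range.1 haq)]
  congr 1
  refine filter_congr fun p _ => and_iff_right_of_imp fun hpa => ?_
  rwa [← ZMod.coprime_mod_iff_coprime, hpa]

lemma totient_add_card_primeFactors_le_primePi {x q : ℕ} (hq : q ≠ 0) (hqx : q ≤ x)
    (hpos : ∀ a ∈ residues q, 1 ≤ primePiMod x q a) :
    q.totient + #q.primeFactors ≤ primePi x := by
  have hcoprime : q.totient ≤ #{p ∈ primesUpTo x | p.Coprime q} := by
    rw [card_eq_sum_card_fiberwise (t := residues q) (f := (· % q))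
      fun p hp => mod_mem_residues hq (mem_filter.1 hp).2, ← card_residues, card_eq_sum_ones]
    exact sum_le_sum fun a ha => (card_filter_coprime_filter_mod_eq ha).symm ▸ hpos a ha
  rw [primePi, ← card_filter_add_card_filter_not (s := primesUpTo x) (·.Coprime q),
    filter_primesUpTo_not_coprime hq hqx]
  omega

lemma mul_abs_one_div_mul_sub_one_div {n φ N : ℝ} (hn : 0 < n) (hN : 0 < N) :
    n * |1 / (φ * n) - 1 / N| = |N / φ - n| / N := by
  rw [← abs_of_pos hn, ← abs_mul, abs_of_pos hn, ← abs_of_pos hN, ← abs_div, abs_of_pos hN]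
  congr 1
  field_simp

lemma sum_filter_coprime_abs_sub_le {x q : ℕ} {B : ℝ} {X : ℕ → ℝ} (hq : q ≠ 0)
    (hπ : 0 < primePi x) (hpos : ∀ a ∈ residues q, 1 ≤ primePiMod x q a)
    (hclose : ∀ a ∈ residues q,
      |(primePiMod x q a : ℝ) - (primePi x : ℝ) / (q.totient : ℝ)| ≤ B)
    (hX : ∀ p ∈ primesUpTo x, p.Coprime q →
      X p = 1 / ((q.totient : ℝ) * (primePiMod x q (p % q) : ℝ))) :
    ∑ p ∈ primesUpTo x with p.Coprime q, |X p - 1 / (primePi x : ℝ)|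
      ≤ q.totient * B / primePi x := by
  have hπ' : (0 : ℝ) < primePi x := by exact_mod_cast hπ
  rw [← sum_fiberwise_of_maps_to (t := residues q) (g := (· % q))
    fun p hp => mod_mem_residues hq (mem_filter.1 hp).2]
  calc
    _ = ∑ a ∈ residues q, |(primePi x : ℝ) / q.totient - primePiMod x q a| / primePi x := by
      refine sum_congr rfl fun a ha => ?_
      have hfiber : ∀ p ∈ {p ∈ {p ∈ primesUpTo x | p.Coprime q} | p % q = a},
          |X p - 1 / (primePi x : ℝ)|
            = |1 / ((q.totient : ℝ) * primePiMod x q a) - 1 / primePi x| := by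
        intro p hfib
        obtain ⟨⟨hp, hpq⟩, rfl⟩ := by simpa only [mem_filter] using hfib
        rw [hX p hp hpq]
      have hna : (0 : ℝ) < primePiMod x q a := by exact_mod_cast hpos a ha
      rw [sum_congr rfl hfiber, sum_const, card_filter_coprime_filter_mod_eq ha, nsmul_eq_mul,
        mul_abs_one_div_mul_sub_one_div hna hπ']
    _ ≤ ∑ _a ∈ residues q, B / primePi x :=
      sum_le_sum fun a ha => div_le_div_of_nonneg_right (by rw [abs_sub_comm]; exact hclose a ha) hπ'.le
    _ = q.totient * B / primePi x := by
      rw [sum_const, card_residues, nsmul_eq_mul, mul_div_assoc]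

lemma sum_filter_not_coprime_abs_sub {x q : ℕ} {X : ℕ → ℝ} (hq : q ≠ 0) (hqx : q ≤ x)
    (hX : ∀ p ∈ primesUpTo x, ¬ p.Coprime q → X p = 0) :
    ∑ p ∈ primesUpTo x with ¬ p.Coprime q, |X p - 1 / (primePi x : ℝ)|
      = #q.primeFactors / primePi x := by
  have hterm : ∀ p ∈ {p ∈ primesUpTo x | ¬ p.Coprime q},
      |X p - 1 / (primePi x : ℝ)| = 1 / primePi x := by
    intro p hp
    obtain ⟨hp, hpq⟩ := mem_filter.1 hp
    rw [hX p hp hpq, zero_sub, abs_neg, abs_of_nonneg (by positivity)]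
  rw [sum_congr rfl hterm, sum_const, filter_primesUpTo_not_coprime hq hqx, nsmul_eq_mul,
    mul_one_div]

lemma mul_add_div_le_sqrt {φ ω N B : ℝ} (hφ : 0 ≤ φ) (hω : 0 ≤ ω) (hN : φ + ω ≤ N)
    (hN0 : 0 < N) : (φ * B + ω) / N ≤ √((φ * B ^ 2 + ω) / N) := by
  apply Real.le_sqrt_of_sq_le
  rw [div_pow, div_le_div_iff₀ (by positivity) hN0]
  have hcs : (φ * B + ω) ^ 2 ≤ (φ + ω) * (φ * B ^ 2 + ω) := by
    nlinarith [mul_nonneg (mul_nonneg hφ hω) (sq_nonneg (B - 1))]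
  have hN' : (φ * B + ω) ^ 2 ≤ N * (φ * B ^ 2 + ω) :=
    hcs.trans (mul_le_mul_of_nonneg_right hN (by positivity))
  nlinarith [mul_le_mul_of_nonneg_right hN' hN0.le]

theorem statDist_le_general (x q : ℕ) (hq : 2 ≤ q) (hqx : q ≤ x)
    (B : ℝ)
    (hpos : ∀ a ∈ residues q, 1 ≤ primePiMod x q a)
    (hclose : ∀ a ∈ residues q,
      |(primePiMod x q a : ℝ) - (primePi x : ℝ) / (q.totient : ℝ)| ≤ B)
    (hπ : 0 < primePi x)
    (X : ℕ → ℝ)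
    (hX : ∀ p ∈ primesUpTo x,
      X p = if Nat.Coprime p q
        then 1 / ((q.totient : ℝ) * (primePiMod x q (p % q) : ℝ)) else 0) :
    ∑ p ∈ primesUpTo x, |X p - 1 / (primePi x : ℝ)|
      ≤ Real.sqrt (((q.totient : ℝ) * B ^ 2 + (q.primeFactors.card : ℝ)) / (primePi x : ℝ)) := by
  have hq0 : q ≠ 0 := by omega
  have hcard : (q.totient : ℝ) + #q.primeFactors ≤ primePi x := by
    exact_mod_cast totient_add_card_primeFactors_le_primePi hq0 hqx hpos
  rw [← sum_filter_add_sum_filter_not _ (·.Coprime q),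
    sum_filter_not_coprime_abs_sub hq0 hqx fun p hp hpq => by rw [hX p hp, if_neg hpq]]
  calc
    _ ≤ q.totient * B / primePi x + #q.primeFactors / primePi x := by
      gcongr
      exact sum_filter_coprime_abs_sub_le hq0 hπ hpos hclose
        fun p hp hpq => by rw [hX p hp, if_pos hpq]
    _ ≤ _ := by
      rw [← add_div]
      exact mul_add_div_le_sqrt (by positivity) (by positivity) hcard (by exact_mod_cast hπ)

/-- Let `x ≥ 2`, `2 ≤ q ≤ x`, `B > 0` real. Assume that for every
`a ∈ (ℤ/qℤ)^*` one has `π(x;q,a) ≥ 1` and `|π(x;q,a) − π(x)/φ(q)| ≤ B`, and `π(x) > 0`.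
Let `X` be the distribution on primes `p ≤ x` with `Pr[X = p] = 1/(φ(q)·π(x;q,p mod q))`
if `gcd(p,q) = 1` and `Pr[X = p] = 0` if `p ∣ q`. Then
`Δ₁(X) ≤ √((φ(q)·B² + ω(q))/π(x))`. -/
theorem statDist_le (x q : ℕ) (hx : 2 ≤ x) (hq : 2 ≤ q) (hqx : q ≤ x)
    (B : ℝ) (hB : 0 < B)
    (hpos : ∀ a ∈ residues q, 1 ≤ primePiMod x q a)
    (hclose : ∀ a ∈ residues q,
      |(primePiMod x q a : ℝ) - (primePi x : ℝ) / (q.totient : ℝ)| ≤ B)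
    (hπ : 0 < primePi x)
    (X : ℕ → ℝ)
    (hX : ∀ p ∈ primesUpTo x,
      X p = if Nat.Coprime p q
        then 1 / ((q.totient : ℝ) * (primePiMod x q (p % q) : ℝ)) else 0) :
    ∑ p ∈ primesUpTo x, |X p - 1 / (primePi x : ℝ)|
      ≤ Real.sqrt (((q.totient : ℝ) * B ^ 2 + (q.primeFactors.card : ℝ)) / (primePi x : ℝ)) :=
  statDist_le_general x q hq hqx B hpos hclose hπ X hX
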